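/- Suppose there exists a constant D > 0 such that h < D and D·b(t+h)² ≤ Q(t) for all t ≥ t₀, and set C := D − h and V(t) := A(t)² − D ∫_{t−h}^{t} b(s+h)² x(s)² ds. If V(t₀) ≥ 0, then every solution x of the delay differential equation satisfies x(t)² ≥ C · V(t₀) · ∫_{t₀}^{t} b(s+h)² ds for all t ≥ t₀. In particular, if V(t₀) > 0 and ∫_{t₀}^{t} b(s+h)² ds → ∞ as t → ∞, then |x(t)| → ∞, so the zero solution is unstable. -/

import Mathlib

/-!
Along a solution, `A' = Q x`. With `w = ∫_{t-h}^t b(s+h) x(s) ds` and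
`P = ∫_{t-h}^t b(s+h)² x(s)² ds`, Cauchy–Schwarz gives `w² ≤ h P ≤ D P`, and together with
`D b(t+h)² ≤ Q` this yields `V' ≥ Q V`. Hence `V(t) ≥ V(t₀) exp ∫_{t₀}^t Q`, which is at least
`V(t₀) (1 + D ∫_{t₀}^t b(s+h)² ds)`. Completing a square in `x(t)` and `w` bounds `(D - h) V(t)`
by `D x(t)²`, and the two estimates combine to the lower bound for `x(t)²`.
-/

open Set MeasureTheory intervalIntegral Filter

lemma ContinuousOn.intervalIntegrable_of_Ici {f : ℝ → ℝ} {c u v : ℝ} (hf : ContinuousOn f (Ici c))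
    (hu : c ≤ u) (hv : c ≤ v) : IntervalIntegrable f volume u v :=
  (hf.mono fun _ hs => le_trans (le_min hu hv) hs.1).intervalIntegrable

lemma hasDerivWithinAt_integral_Ici {f : ℝ → ℝ} {c p : ℝ} (hf : ContinuousOn f (Ici c))
    (hp : c ≤ p) : HasDerivWithinAt (fun u => ∫ s in c..u, f s) (f p) (Ici c) p := by
  have hint := hf.intervalIntegrable_of_Ici le_rfl hp
  have hmeas := hf.aestronglyMeasurable (μ := volume) measurableSet_Ici
  rcases hp.eq_or_lt with rfl | hlt
  · exact integral_hasDerivWithinAt_right hint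
      ⟨Ici c, mem_of_superset self_mem_nhdsWithin Ioi_subset_Ici_self, hmeas⟩
      ((hf.continuousWithinAt self_mem_Ici).mono Ioi_subset_Ici_self)
  · exact (integral_hasDerivAt_right hint ⟨Ici c, Ici_mem_nhds hlt, hmeas⟩
      (hf.continuousAt (Ici_mem_nhds hlt))).hasDerivWithinAt

lemma hasDerivWithinAt_integral_window {f : ℝ → ℝ} {c h t : ℝ}
    (hf : ContinuousOn f (Ici (c - h))) (hh : 0 ≤ h) (ht : c ≤ t) :
    HasDerivWithinAt (fun τ => ∫ s in (τ - h)..τ, f s) (f t - f (t - h)) (Ici c) t := by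
  set F : ℝ → ℝ := fun u => ∫ s in (c - h)..u, f s
  have hF : ∀ p, c - h ≤ p → HasDerivWithinAt F (f p) (Ici (c - h)) p :=
    fun p hp => hasDerivWithinAt_integral_Ici hf hp
  have hshift : HasDerivWithinAt (fun τ => F (τ - h)) (f (t - h)) (Ici c) t := by
    have := (hF (t - h) (by linarith)).comp t ((hasDerivAt_id' t).sub_const h).hasDerivWithinAt
      fun τ (hτ : τ ∈ Ici c) => show c - h ≤ τ - h by linarith [mem_Ici.1 hτ]
    rwa [mul_one] at this
  have hsplit : ∀ τ ∈ Ici c, ∫ s in (τ - h)..τ, f s = F τ - F (τ - h) := fun τ hτ =>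
    (integral_interval_sub_left (hf.intervalIntegrable_of_Ici le_rfl (by linarith [mem_Ici.1 hτ]))
      (hf.intervalIntegrable_of_Ici le_rfl (by linarith [mem_Ici.1 hτ]))).symm
  exact (((hF t (by linarith)).mono (Ici_subset_Ici.2 (by linarith))).sub hshift).congr hsplit
    (hsplit t ht)

/-- Cauchy–Schwarz, from the nonpositive discriminant of the quadratic `c ↦ ∫ (f - c)²`. -/
lemma sq_intervalIntegral_le {f : ℝ → ℝ} {u v : ℝ} (huv : u ≤ v)
    (hf : IntervalIntegrable f volume u v)
    (hf2 : IntervalIntegrable (fun s => f s ^ 2) volume u v) :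
    (∫ s in u..v, f s) ^ 2 ≤ (v - u) * ∫ s in u..v, f s ^ 2 := by
  have hquad : ∀ c : ℝ,
      0 ≤ (v - u) * (c * c) + (-2 * ∫ s in u..v, f s) * c + ∫ s in u..v, f s ^ 2 := by
    intro c
    have hlin := hf.const_mul 2 |>.mul_const c
    have hexp : ∫ s in u..v, (f s - c) ^ 2
        = (v - u) * (c * c) + (-2 * ∫ s in u..v, f s) * c + ∫ s in u..v, f s ^ 2 := by
      simp only [sub_sq, integral_add (hf2.sub hlin) intervalIntegrable_const,
        integral_sub hf2 hlin, intervalIntegral.integral_mul_const,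
        intervalIntegral.integral_const_mul, intervalIntegral.integral_const, smul_eq_mul]
      ring
    exact hexp ▸ integral_nonneg huv fun s _ => sq_nonneg (f s - c)
  have := discrim_le_zero hquad
  rw [discrim] at this
  linarith

open Real in
lemma mul_exp_integral_le_of_mul_le_deriv {f f' q : ℝ → ℝ} {t₀ t : ℝ}
    (hq : ContinuousOn q (Ici t₀)) (hf : ∀ s, t₀ ≤ s → HasDerivWithinAt f (f' s) (Ici t₀) s)
    (hle : ∀ s, t₀ ≤ s → q s * f s ≤ f' s) (ht : t₀ ≤ t) :
    f t₀ * exp (∫ s in t₀..t, q s) ≤ f t := by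
  set R : ℝ → ℝ := fun u => ∫ s in t₀..u, q s
  have hW : ∀ s, t₀ ≤ s → HasDerivWithinAt (fun u => f u * exp (-R u))
      (exp (-R s) * (f' s - q s * f s)) (Ici t₀) s := fun s hs => by
    have hE : HasDerivWithinAt (fun u => exp (-R u)) (exp (-R s) * -q s) (Ici t₀) s :=
      (hasDerivWithinAt_integral_Ici hq hs).neg.exp
    exact ((hf s hs).mul hE).congr_deriv (by ring)
  have hmono : MonotoneOn (fun u => f u * exp (-R u)) (Ici t₀) := by
    refine monotoneOn_of_hasDerivWithinAt_nonneg (f' := fun s => exp (-R s) * (f' s - q s * f s))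
      (convex_Ici t₀) (fun s hs => (hW s hs).continuousWithinAt) (fun s hs => ?_) fun s hs => ?_
    · rw [interior_Ici] at hs ⊢
      exact (hW s hs.le).mono Ioi_subset_Ici_self
    · rw [interior_Ici] at hs
      exact mul_nonneg (exp_pos _).le (sub_nonneg.2 (hle s hs.le))
  have hW_le : f t₀ ≤ f t * exp (-R t) := by
    simpa [R] using hmono self_mem_Ici ht ht
  calc f t₀ * exp (R t) ≤ f t * exp (-R t) * exp (R t) :=
        mul_le_mul_of_nonneg_right hW_le (exp_pos _).le
    _ = f t := by rw [mul_assoc, ← exp_add, neg_add_cancel, exp_zero, mul_one]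

lemma tendsto_abs_atTop_of_le_sq {g x : ℝ → ℝ} (hg : Tendsto g atTop atTop)
    (hle : ∀ᶠ t in atTop, g t ≤ x t ^ 2) : Tendsto (fun t => |x t|) atTop atTop :=
  (Real.tendsto_sqrt_atTop.comp (tendsto_atTop_mono' _ hle hg)).congr fun t =>
    Real.sqrt_sq_eq_abs (x t)

namespace DelayDiffEq

variable {a b x A V : ℝ → ℝ} {t₀ h D t : ℝ}

lemma sq_integral_window_le (hb : Continuous b) (hxc : ContinuousOn x (Ici (t₀ - h))) (hh : 0 ≤ h)
    (ht : t₀ ≤ t) :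
    (∫ s in (t - h)..t, b (s + h) * x s) ^ 2 ≤ h * ∫ s in (t - h)..t, b (s + h) ^ 2 * x s ^ 2 := by
  have hcont : ContinuousOn (fun s => b (s + h) * x s) (Ici (t₀ - h)) := by fun_prop
  have := sq_intervalIntegral_le (u := t - h) (v := t) (by linarith)
    (hcont.intervalIntegrable_of_Ici (by linarith) (by linarith))
    ((hcont.pow 2).intervalIntegrable_of_Ici (by linarith) (by linarith))
  simpa only [sub_sub_cancel, mul_pow] using this

lemma hasDerivWithinAt_A (hb : Continuous b) (hxc : ContinuousOn x (Ici (t₀ - h)))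
    (hx : ∀ t, t₀ ≤ t → HasDerivWithinAt x (a t * x t + b t * x (t - h)) (Ici t₀) t)
    (hA : ∀ t, A t = x t + ∫ s in (t - h)..t, b (s + h) * x s) (hh : 0 ≤ h) (ht : t₀ ≤ t) :
    HasDerivWithinAt A ((a t + b (t + h)) * x t) (Ici t₀) t := by
  have hwin := hasDerivWithinAt_integral_window (f := fun s => b (s + h) * x s)
    (by fun_prop) hh ht
  rw [sub_add_cancel] at hwin
  exact ((hx t ht).add hwin).congr (fun τ _ => hA τ) (hA t) |>.congr_deriv (by ring)

lemma hasDerivWithinAt_V (hb : Continuous b) (hxc : ContinuousOn x (Ici (t₀ - h)))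
    (hx : ∀ t, t₀ ≤ t → HasDerivWithinAt x (a t * x t + b t * x (t - h)) (Ici t₀) t)
    (hA : ∀ t, A t = x t + ∫ s in (t - h)..t, b (s + h) * x s)
    (hV : ∀ t, V t = A t ^ 2 - D * ∫ s in (t - h)..t, b (s + h) ^ 2 * x s ^ 2)
    (hh : 0 ≤ h) (ht : t₀ ≤ t) :
    HasDerivWithinAt V (2 * A t * ((a t + b (t + h)) * x t)
      - D * (b (t + h) ^ 2 * x t ^ 2 - b t ^ 2 * x (t - h) ^ 2)) (Ici t₀) t := by
  have hwin := hasDerivWithinAt_integral_window (f := fun s => b (s + h) ^ 2 * x s ^ 2)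
    (by fun_prop) hh ht
  rw [sub_add_cancel] at hwin
  have hA2 := (hasDerivWithinAt_A hb hxc hx hA hh ht).pow 2
  exact (hA2.sub (hwin.const_mul D)).congr (fun τ _ => hV τ) (hV t) |>.congr_deriv (by ring)

lemma mul_V_le_deriv (hb : Continuous b) (hxc : ContinuousOn x (Ici (t₀ - h)))
    (hA : ∀ t, A t = x t + ∫ s in (t - h)..t, b (s + h) * x s)
    (hV : ∀ t, V t = A t ^ 2 - D * ∫ s in (t - h)..t, b (s + h) ^ 2 * x s ^ 2)
    (hh : 0 ≤ h) (hhD : h ≤ D) (hcond : D * b (t + h) ^ 2 ≤ a t + b (t + h)) (ht : t₀ ≤ t) :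
    (a t + b (t + h)) * V t ≤ 2 * A t * ((a t + b (t + h)) * x t)
      - D * (b (t + h) ^ 2 * x t ^ 2 - b t ^ 2 * x (t - h) ^ 2) := by
  set q := a t + b (t + h)
  set w := ∫ s in (t - h)..t, b (s + h) * x s
  set P := ∫ s in (t - h)..t, b (s + h) ^ 2 * x s ^ 2
  have hw : w ^ 2 ≤ h * P := sq_integral_window_le hb hxc hh ht
  have hP : 0 ≤ P := integral_nonneg (by linarith) fun s _ => by positivity
  have hq : 0 ≤ q := le_trans (mul_nonneg (hh.trans hhD) (sq_nonneg _)) hcond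
  have hDP : w ^ 2 ≤ D * P := hw.trans (mul_le_mul_of_nonneg_right hhD hP)
  -- the difference of the two sides is `(q - D b(t+h)²) x² + q (D P - w²) + D b(t)² x(t-h)²`
  rw [hV, hA]
  nlinarith [mul_le_mul_of_nonneg_left hDP hq, mul_le_mul_of_nonneg_right hcond (sq_nonneg (x t)),
    mul_nonneg (hh.trans hhD) (mul_nonneg (sq_nonneg (b t)) (sq_nonneg (x (t - h))))]

lemma sub_mul_V_le (hb : Continuous b) (hxc : ContinuousOn x (Ici (t₀ - h)))
    (hA : ∀ t, A t = x t + ∫ s in (t - h)..t, b (s + h) * x s)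
    (hV : ∀ t, V t = A t ^ 2 - D * ∫ s in (t - h)..t, b (s + h) ^ 2 * x s ^ 2)
    (hh : 0 < h) (hhD : h ≤ D) (ht : t₀ ≤ t) :
    (D - h) * V t ≤ D * x t ^ 2 := by
  set w := ∫ s in (t - h)..t, b (s + h) * x s
  set P := ∫ s in (t - h)..t, b (s + h) ^ 2 * x s ^ 2
  have hw : w ^ 2 ≤ h * P := sq_integral_window_le hb hxc hh.le ht
  -- `h` times the difference of the two sides is `(h x - (D - h) w)² + D (D - h) (h P - w²)`
  rw [hV, hA]
  refine le_of_mul_le_mul_left ?_ hh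
  nlinarith [sq_nonneg (h * x t - (D - h) * w),
    mul_nonneg (mul_nonneg (hh.le.trans hhD) (sub_nonneg.2 hhD)) (sub_nonneg.2 hw)]

end DelayDiffEq

open DelayDiffEq in
theorem stmt19 (t0 h D : ℝ) (hh : 0 < h) (hD : 0 < D) (hhD : h < D)
    (a b x : ℝ → ℝ) (ha : Continuous a) (hb : Continuous b)
    -- x is a solution of the delay differential equation
    (hxc : ContinuousOn x (Set.Ici (t0 - h)))
    (hx : ∀ t, t0 ≤ t → HasDerivWithinAt x (a t * x t + b t * x (t - h)) (Set.Ici t0) t)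
    -- the auxiliary functions Q, A, V and the constant C
    (Q A V : ℝ → ℝ) (C : ℝ)
    (hQ : ∀ t, Q t = a t + b (t + h))
    (hA : ∀ t, A t = x t + ∫ s in (t - h)..t, b (s + h) * x s)
    (hV : ∀ t, V t = (A t) ^ 2 - D * ∫ s in (t - h)..t, (b (s + h)) ^ 2 * (x s) ^ 2)
    (hC : C = D - h)
    -- the condition D·b(t+h)² ≤ Q(t)
    (hcond : ∀ t, t0 ≤ t → D * (b (t + h)) ^ 2 ≤ Q t)
    (hV0 : 0 ≤ V t0) :
    (∀ t, t0 ≤ t → C * V t0 * (∫ s in t0..t, (b (s + h)) ^ 2) ≤ (x t) ^ 2) ∧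
    (0 < V t0 →
      Filter.Tendsto (fun t => ∫ s in t0..t, (b (s + h)) ^ 2) Filter.atTop Filter.atTop →
      Filter.Tendsto (fun t => |x t|) Filter.atTop Filter.atTop) := by
  obtain rfl : Q = fun t => a t + b (t + h) := funext hQ
  subst hC
  have hexp : ∀ t, t0 ≤ t →
      1 + D * ∫ s in t0..t, b (s + h) ^ 2 ≤ Real.exp (∫ s in t0..t, (a s + b (s + h))) := by
    intro t ht
    rw [← intervalIntegral.integral_const_mul]
    refine le_trans ?_ (Real.add_one_le_exp _)
    have := intervalIntegral.integral_mono_on ht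
      ((by fun_prop : Continuous _).intervalIntegrable (μ := volume) _ _)
      ((by fun_prop : Continuous _).intervalIntegrable (μ := volume) _ _) fun s hs => hcond s hs.1
    linarith
  have hVgrowth : ∀ t, t0 ≤ t → V t0 * (1 + D * ∫ s in t0..t, b (s + h) ^ 2) ≤ V t :=
    fun t ht => (mul_le_mul_of_nonneg_left (hexp t ht) hV0).trans <|
      mul_exp_integral_le_of_mul_le_deriv (by fun_prop)
        (fun s hs => hasDerivWithinAt_V hb hxc hx hA hV hh.le hs)
        (fun s hs => mul_V_le_deriv hb hxc hA hV hh.le hhD.le (hcond s hs) hs) ht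
  have hlower : ∀ t, t0 ≤ t → (D - h) * V t0 * (∫ s in t0..t, b (s + h) ^ 2) ≤ x t ^ 2 := by
    intro t ht
    refine le_of_mul_le_mul_left ?_ hD
    nlinarith [sub_mul_V_le hb hxc hA hV hh hhD.le ht, hVgrowth t ht,
      mul_nonneg (sub_nonneg.2 hhD.le) hV0]
  refine ⟨hlower, fun hVpos hI => tendsto_abs_atTop_of_le_sq
    (hI.const_mul_atTop (mul_pos (sub_pos.2 hhD) hVpos)) ?_⟩
  filter_upwards [eventually_ge_atTop t0] with t ht using hlower t ht
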